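/- arXiv:2105.00432 — 2 statements merged into one kernel-verified Lean document; each statement's English description precedes it below -/
import Mathlib

section
/- Let (𝔛,d) be a complete separable metric space and ν a doubling Borel measure such that (𝔛,d,ν) supports a weak (1,1)-Poincaré inequality. Let Ω ⊆ 𝔛 be an open bounded regular domain with ν(∂Ω) = 0 such that (Ω,d,ν) supports a weak (1,1)-Poincaré inequality, and let φ_t^Ω be its defining sequence. Then lim_{t→0⁺} ∫_𝔛 |∇φ_t^Ω| dν = |D1_Ω|_ν(𝔛). -/
open MeasureTheory Metric Set Filter Topology ENNReal

noncomputable section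

variable {X : Type*}

/-- The slope (local Lipschitz constant) of `u : X → ℝ` relative to the set `Ω`:
`|∇u|(x) = limsup_{y → x, y ∈ Ω, y ≠ x} |u y - u x| / d(y,x)` (with value `0` at points
isolated in `Ω`). -/
def slopeWithin [MetricSpace X] (Ω : Set X) (u : X → ℝ) (x : X) : ℝ≥0∞ :=
  Filter.limsup (fun y => ENNReal.ofReal (|u y - u x| / dist y x)) (nhdsWithin x (Ω \ {x}))

/-- `u` is locally Lipschitz on `Ω`. -/
def LocLipschitzOn [MetricSpace X] (Ω : Set X) (u : X → ℝ) : Prop :=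
  ∀ x ∈ Ω, ∃ K : NNReal, ∃ t ∈ nhdsWithin x Ω, LipschitzOnWith K u t

/-- `un → u` in `L¹(Ω, ν)`. -/
def TendstoL1 [MeasurableSpace X] (ν : Measure X) (Ω : Set X)
    (un : ℕ → X → ℝ) (u : X → ℝ) : Prop :=
  Tendsto (fun n => ∫⁻ x in Ω, ENNReal.ofReal |un n x - u x| ∂ν) atTop (𝓝 0)

/-- The total variation `|Du|_ν(Ω)` of `u` on `Ω`, defined by relaxation of the integral of the
slope along locally Lipschitz approximations in `L¹(Ω,ν)`. -/
def totalVariationOn [MetricSpace X] [MeasurableSpace X] (ν : Measure X) (Ω : Set X)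
    (u : X → ℝ) : ℝ≥0∞ :=
  sInf { V : ℝ≥0∞ | ∃ un : ℕ → X → ℝ, (∀ n, LocLipschitzOn Ω (un n)) ∧ TendstoL1 ν Ω un u ∧
    V = Filter.liminf (fun n => ∫⁻ x in Ω, slopeWithin Ω (un n) x ∂ν) atTop }

/-- `u ∈ BV(Ω, d, ν)`. -/
def MemBV [MetricSpace X] [MeasurableSpace X] (ν : Measure X) (Ω : Set X) (u : X → ℝ) : Prop :=
  Integrable u (ν.restrict Ω) ∧ totalVariationOn ν Ω u < ⊤

/-- The `BV(Ω,d,ν)` norm: `‖u‖_{L¹(Ω,ν)} + |Du|_ν(Ω)`. -/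
def bvNorm [MetricSpace X] [MeasurableSpace X] (ν : Measure X) (Ω : Set X) (u : X → ℝ) : ℝ≥0∞ :=
  (∫⁻ x in Ω, ENNReal.ofReal |u x| ∂ν) + totalVariationOn ν Ω u

/-- The restriction of `ν` to `S` is a doubling measure on the metric space `(S, d)`. -/
def DoublingOn [MetricSpace X] [MeasurableSpace X] (ν : Measure X) (S : Set X) : Prop :=
  ∃ C : NNReal, 1 ≤ C ∧ ∀ x ∈ S, ∀ r : ℝ, 0 < r →
    0 < ν (S ∩ ball x (2 * r)) ∧ ν (S ∩ ball x (2 * r)) ≤ (C : ℝ≥0∞) * ν (S ∩ ball x r) ∧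
      ν (S ∩ ball x r) < ⊤

/-- The metric speed `|γ̇|(t) = limsup_{τ → 0} d(γ(t+τ), γ t)/|τ|`. -/
def metricSpeed [MetricSpace X] (γ : ℝ → X) (t : ℝ) : ℝ≥0∞ :=
  Filter.limsup (fun τ : ℝ => ENNReal.ofReal (dist (γ (t + τ)) (γ t) / |τ|)) (𝓝[≠] (0 : ℝ))

/-- `g` is an upper gradient of `u` on the metric space `(S, d)`: for every Lipschitz curve
`γ : [a,b] → S` one has `|u(γ b) - u(γ a)| ≤ ∫_a^b g(γ t) |γ̇|(t) dt`. -/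
def IsUpperGradientOn [MetricSpace X] (S : Set X) (u : X → ℝ) (g : X → ℝ≥0∞) : Prop :=
  ∀ (a b : ℝ) (γ : ℝ → X), a ≤ b → (∃ K : NNReal, LipschitzOnWith K γ (Set.Icc a b)) →
    Set.MapsTo γ (Set.Icc a b) S →
    ENNReal.ofReal |u (γ b) - u (γ a)| ≤ ∫⁻ t in Set.Icc a b, g (γ t) * metricSpeed γ t

/-- The metric measure space `(S, d, ν)` (with restricted distance and measure) supports a weak
`(1,1)`-Poincaré inequality. -/
def WeakPoincareOn [MetricSpace X] [MeasurableSpace X] (ν : Measure X) (S : Set X) : Prop :=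
  ∃ C l : ℝ, 0 < C ∧ 1 ≤ l ∧ ∀ x ∈ S, ∀ r : ℝ, 0 < r →
    ∀ (u : X → ℝ) (g : X → ℝ≥0∞), Measurable u → Measurable g → IsUpperGradientOn S u g →
      (∫⁻ y in S ∩ ball x r, ENNReal.ofReal |u y - ⨍ z in S ∩ ball x r, u z ∂ν| ∂ν) /
          ν (S ∩ ball x r) ≤
        ENNReal.ofReal (C * r) *
          ((∫⁻ y in S ∩ ball x (l * r), g y ∂ν) / ν (S ∩ ball x (l * r)))

/-- Codimension-one Hausdorff premeasure at scale `R`: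
`inf { Σᵢ ν(B(xᵢ,rᵢ))/rᵢ : A ⊆ ⋃ᵢ B(xᵢ,rᵢ), 0 < rᵢ ≤ R }`. -/
def codimOneHPre [MetricSpace X] [MeasurableSpace X] (ν : Measure X) (R : ℝ) (A : Set X) :
    ℝ≥0∞ :=
  ⨅ (c : ℕ → X × ℝ)
    (_ : (∀ i, 0 < (c i).2 ∧ (c i).2 ≤ R) ∧ A ⊆ ⋃ i, ball (c i).1 (c i).2),
    ∑' i, ν (ball (c i).1 (c i).2) / ENNReal.ofReal (c i).2

/-- The codimension-one Hausdorff measure `ℋ` associated to `ν`, as the limit (= supremum, by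
antitonicity) of the premeasures as the scale `R → 0⁺`. -/
def codimOneH [MetricSpace X] [MeasurableSpace X] (ν : Measure X) (A : Set X) : ℝ≥0∞ :=
  ⨆ (R : ℝ) (_ : 0 < R), codimOneHPre ν R A

/-- `P` holds at `ℋ`-a.e. point of `A`. -/
def HAEOn [MetricSpace X] [MeasurableSpace X] (ν : Measure X) (A : Set X) (P : X → Prop) :
    Prop :=
  codimOneH ν {x ∈ A | ¬ P x} = 0

/-- The `L¹(A, ℋ)` norm `∫_A |f| dℋ` of `f`, as the Choquet (layer-cake) integral of `|f|`
over `A` against the codimension-one Hausdorff measure. -/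
def hL1Norm [MetricSpace X] [MeasurableSpace X] (ν : Measure X) (A : Set X) (f : X → ℝ) :
    ℝ≥0∞ :=
  ∫⁻ t in Set.Ioi (0 : ℝ), codimOneH ν {x ∈ A | t < |f x|}

/-- `c` is the trace of `u` at the point `x ∈ ∂Ω`:
`⨍_{Ω ∩ B(x,r)} |u - c| dν → 0` as `r → 0⁺`. -/
def IsTraceAt [MetricSpace X] [MeasurableSpace X] (ν : Measure X) (Ω : Set X) (u : X → ℝ)
    (x : X) (c : ℝ) : Prop :=
  Tendsto (fun r : ℝ =>
      (∫⁻ y in Ω ∩ ball x r, ENNReal.ofReal |u y - c| ∂ν) / ν (Ω ∩ ball x r))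
    (𝓝[>] (0 : ℝ)) (𝓝 0)

/-- Standing assumptions on the domain `Ω`: open, bounded, supporting a weak `(1,1)`-Poincaré
inequality, satisfying the measure density condition, with boundary Ahlfors codimension-one
regular. -/
def StandingAssumptions [MetricSpace X] [MeasurableSpace X] (ν : Measure X) (Ω : Set X) :
    Prop :=
  IsOpen Ω ∧ Bornology.IsBounded Ω ∧ WeakPoincareOn ν Ω ∧
  (∃ C : NNReal, 0 < C ∧ HAEOn ν (frontier Ω)
      (fun x => ∀ r : ℝ, 0 < r → r < Metric.diam Ω →
        (C : ℝ≥0∞) * ν (ball x r) ≤ ν (Ω ∩ ball x r))) ∧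
  (∃ C : ℝ, 0 < C ∧ ∀ x ∈ frontier Ω, ∀ r : ℝ, 0 < r → r < Metric.diam Ω →
      ν (ball x r) / ENNReal.ofReal r ≤ ENNReal.ofReal C * codimOneH ν (ball x r ∩ frontier Ω) ∧
      codimOneH ν (ball x r ∩ frontier Ω) ≤ ENNReal.ofReal C * (ν (ball x r) / ENNReal.ofReal r))

/-- The traces of `u` and `v` on `∂Ω` exist and coincide `ℋ`-a.e. -/
def SameTrace [MetricSpace X] [MeasurableSpace X] (ν : Measure X) (Ω : Set X) (u v : X → ℝ) :
    Prop :=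
  HAEOn ν (frontier Ω) (fun x => ∃ c : ℝ, IsTraceAt ν Ω u x c ∧ IsTraceAt ν Ω v x c)

/-- `u` is a function of least gradient in `Ω`: it minimises the total variation among all BV
functions with the same trace on `∂Ω`. -/
def IsLeastGradient [MetricSpace X] [MeasurableSpace X] (ν : Measure X) (Ω : Set X)
    (u : X → ℝ) : Prop :=
  MemBV ν Ω u ∧ ∀ v : X → ℝ, MemBV ν Ω v → SameTrace ν Ω u v →
    totalVariationOn ν Ω u ≤ totalVariationOn ν Ω v

/-- `Ω_t = { x ∈ Ω : dist(x, Ωᶜ) ≥ t }`. -/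
def innerSet [MetricSpace X] (Ω : Set X) (t : ℝ) : Set X :=
  {x ∈ Ω | t ≤ Metric.infDist x Ωᶜ}

/-- `Ω` is a regular domain: an open set of finite perimeter with
`|D1_Ω|_ν(X) = limsup_{t→0⁺} ν(Ω ∖ Ω_t)/t`. -/
def IsRegularDomain [MetricSpace X] [MeasurableSpace X] (ν : Measure X) (Ω : Set X) : Prop :=
  IsOpen Ω ∧ MemBV ν Set.univ (Ω.indicator fun _ => (1 : ℝ)) ∧
  totalVariationOn ν Set.univ (Ω.indicator fun _ => (1 : ℝ)) =
    Filter.limsup (fun t : ℝ => ν (Ω \ innerSet Ω t) / ENNReal.ofReal t) (𝓝[>] (0 : ℝ))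

/-- The defining sequence `φ_t^Ω` of a regular domain: `0` outside `Ω`, `dist(x,Ωᶜ)/t` on
`Ω ∖ Ω_t` and `1` on `Ω_t`. -/
def definingSeq [MetricSpace X] (Ω : Set X) (t : ℝ) : X → ℝ :=
  Ω.indicator fun x => min 1 (Metric.infDist x Ωᶜ / t)

/-- The inner perimeter `P₊(Ω, U)`. -/
def innerPerimeter [MetricSpace X] [MeasurableSpace X] (ν : Measure X) (Ω U : Set X) : ℝ≥0∞ :=
  sInf { V : ℝ≥0∞ | ∃ ψ : ℕ → X → ℝ, (∀ n, LocLipschitzOn U (ψ n)) ∧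
    TendstoL1 ν U ψ (Ω.indicator fun _ => (1 : ℝ)) ∧ (∀ n, ∀ x ∈ U \ Ω, ψ n x = 0) ∧
    V = Filter.liminf (fun n => ∫⁻ x in U, slopeWithin U (ψ n) x ∂ν) atTop }

/-!
`φ_t` is `1/t`-Lipschitz and locally constant off `closure Ω ∩ {dist(·, Ωᶜ) ≤ t}`; up to the
null set `∂Ω` this set lies in the collar `Ω ∖ Ω_{ct}` for every `c > 1`, so
`∫ |∇φ_t| dν ≤ c · ν(Ω ∖ Ω_{ct}) / (ct)` and the limsup is at most the one in the definition of a
regular domain, i.e. the perimeter. Conversely, finiteness of that limsup forces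
`ν(Ω ∖ Ω_t) → 0`, so `φ_{t_n} → 1_Ω` in `L¹` along any `t_n → 0⁺`, and the relaxation defining
`|D1_Ω|_ν` bounds the perimeter by the liminf.
-/

section Slope

variable [MetricSpace X] {S : Set X} {u : X → ℝ} {x : X}

theorem slopeWithin_le_of_lipschitzWith {K : NNReal} (hu : LipschitzWith K u) (x : X) :
    slopeWithin S u x ≤ K := by
  refine limsup_le_of_le (by isBoundedDefault) ?_
  filter_upwards [eventually_mem_nhdsWithin] with y hy
  rw [← ENNReal.ofReal_coe_nnreal]
  refine ENNReal.ofReal_le_ofReal ((div_le_iff₀ (dist_pos.mpr hy.2)).mpr ?_)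
  simpa [Real.dist_eq] using hu.dist_le_mul y x

theorem slopeWithin_eq_zero_of_eventuallyEq (hu : u =ᶠ[𝓝 x] fun _ => u x) :
    slopeWithin S u x = 0 := by
  refine le_antisymm (limsup_le_of_le (by isBoundedDefault) ?_) zero_le
  filter_upwards [nhdsWithin_le_nhds hu] with y hy
  simp [hy]

end Slope

section DefiningSeq

variable [MetricSpace X] (Ω : Set X) {t : ℝ}

theorem definingSeq_eq_min (t : ℝ) :
    definingSeq Ω t = fun x => min 1 (infDist x Ωᶜ / t) := by
  funext x
  by_cases hx : x ∈ Ω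
  · simp [definingSeq, hx]
  · simp [definingSeq, hx, infDist_zero_of_mem (show x ∈ Ωᶜ from hx)]

theorem lipschitzWith_definingSeq (t : ℝ) : LipschitzWith ‖t‖₊⁻¹ (definingSeq Ω t) := by
  rw [definingSeq_eq_min]
  refine LipschitzWith.const_min (LipschitzWith.of_dist_le_mul fun x y => ?_) 1
  rw [Real.dist_eq, NNReal.coe_inv, coe_nnnorm, Real.norm_eq_abs, ← sub_div, abs_div,
    div_eq_inv_mul]
  gcongr
  simpa [Real.dist_eq] using (lipschitz_infDist_pt Ωᶜ).dist_le_mul x y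

theorem slopeWithin_definingSeq_le_indicator (S : Set X) (ht : 0 < t) (x : X) :
    slopeWithin S (definingSeq Ω t) x ≤
      (closure Ω ∩ {y | infDist y Ωᶜ ≤ t}).indicator (fun _ => ENNReal.ofReal t⁻¹) x := by
  by_cases hx : x ∈ closure Ω ∩ {y | infDist y Ωᶜ ≤ t}
  · rw [indicator_of_mem hx]
    convert slopeWithin_le_of_lipschitzWith (lipschitzWith_definingSeq Ω t) x
    rw [← ENNReal.ofReal_coe_nnreal, NNReal.coe_inv, coe_nnnorm, Real.norm_of_nonneg ht.le]
  rw [indicator_of_notMem hx, nonpos_iff_eq_zero]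
  apply slopeWithin_eq_zero_of_eventuallyEq
  rcases not_and_or.mp hx with hx | hx
  · filter_upwards [isClosed_closure.isOpen_compl.mem_nhds hx] with y hy
    have hyΩ : y ∉ Ω := fun h => hy (subset_closure h)
    have hxΩ : x ∉ Ω := fun h => hx (subset_closure h)
    simp [definingSeq, hyΩ, hxΩ]
  · have hopen : IsOpen {y : X | t < infDist y Ωᶜ} :=
      isOpen_lt continuous_const (continuous_infDist_pt _)
    filter_upwards [hopen.mem_nhds (show t < infDist x Ωᶜ from not_le.mp hx)] with y hy
    simp only [definingSeq_eq_min, min_eq_left ((one_le_div ht).mpr hy.le),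
      min_eq_left ((one_le_div ht).mpr (not_le.mp hx).le)]

theorem abs_definingSeq_sub_indicator_le (ht : 0 < t) (x : X) :
    ENNReal.ofReal |definingSeq Ω t x - Ω.indicator (fun _ => (1 : ℝ)) x| ≤
      (Ω \ innerSet Ω t).indicator (fun _ => 1) x := by
  by_cases hxΩ : x ∈ Ω
  swap
  · simp [definingSeq, hxΩ]
  by_cases hxt : t ≤ infDist x Ωᶜ
  · have hx : x ∉ Ω \ innerSet Ω t := fun h => h.2 ⟨hxΩ, hxt⟩
    simp [definingSeq, hxΩ, hx, (one_le_div ht).mpr hxt]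
  · have hx : x ∈ Ω \ innerSet Ω t := ⟨hxΩ, fun h => hxt h.2⟩
    rw [indicator_of_mem hx, definingSeq_eq_min, indicator_of_mem hxΩ, ENNReal.ofReal_le_one,
      abs_le]
    have : 0 ≤ infDist x Ωᶜ / t := div_nonneg infDist_nonneg ht.le
    constructor <;> linarith [min_le_left 1 (infDist x Ωᶜ / t), le_min zero_le_one this]

theorem closure_inter_infDist_le_subset {s : ℝ} (hts : t < s) :
    closure Ω ∩ {y | infDist y Ωᶜ ≤ t} ⊆ frontier Ω ∪ (Ω \ innerSet Ω s) := by
  rintro y ⟨hy, hyt⟩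
  by_cases hyΩ : y ∈ Ω
  · exact Or.inr ⟨hyΩ, fun h => (hts.trans_le h.2).not_ge hyt⟩
  · exact Or.inl ⟨hy, fun h => hyΩ (interior_subset h)⟩

end DefiningSeq

theorem limsup_comp_const_mul_nhdsGT_zero_le {α : Type*} [CompleteLattice α] {c : ℝ}
    (hc : 0 < c) (g : ℝ → α) :
    limsup (fun t => g (c * t)) (𝓝[>] 0) ≤ limsup g (𝓝[>] 0) :=
  Tendsto.limsup_comp_le_limsup (v := (c * ·)) <| by
    simpa only [comap_mulLeft_nhdsGT_zero hc] using tendsto_comap (f := (c * ·)) (x := 𝓝[>] 0)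

theorem tendsto_nhdsGT_zero_of_limsup_div_ne_top {f : ℝ → ℝ≥0∞}
    (hf : limsup (fun t => f t / ENNReal.ofReal t) (𝓝[>] 0) ≠ ⊤) :
    Tendsto f (𝓝[>] 0) (𝓝 0) := by
  obtain ⟨M, hM, hMtop⟩ := exists_between hf.lt_top
  have hbound : ∀ᶠ t in 𝓝[>] 0, f t ≤ M * ENNReal.ofReal t := by
    filter_upwards [eventually_lt_of_limsup_lt hM, self_mem_nhdsWithin] with t ht ht0
    exact (ENNReal.div_le_iff (by simpa using ht0) ENNReal.ofReal_ne_top).mp ht.le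
  have hlim : Tendsto (fun t => M * ENNReal.ofReal t) (𝓝[>] 0) (𝓝 0) := by
    simpa using ENNReal.Tendsto.const_mul
      ((ENNReal.continuous_ofReal.tendsto 0).mono_left nhdsWithin_le_nhds) (Or.inr hMtop.ne)
  exact tendsto_of_tendsto_of_tendsto_of_le_of_le' tendsto_const_nhds hlim
    (Eventually.of_forall fun _ => zero_le) hbound

section Measure

variable [MetricSpace X] [MeasurableSpace X] (ν : Measure X) (Ω : Set X) {t : ℝ}

theorem totalVariationOn_le_liminf {S : Set X} {u : X → ℝ} {un : ℕ → X → ℝ}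
    (hlip : ∀ n, LocLipschitzOn S (un n)) (hun : TendstoL1 ν S un u) :
    totalVariationOn ν S u ≤ liminf (fun n => ∫⁻ x in S, slopeWithin S (un n) x ∂ν) atTop :=
  sInf_le ⟨un, hlip, hun, rfl⟩

theorem lintegral_slopeWithin_definingSeq_le (hΩ : ν (frontier Ω) = 0) (S : Set X) {s : ℝ}
    (ht : 0 < t) (hts : t < s) :
    ∫⁻ x, slopeWithin S (definingSeq Ω t) x ∂ν ≤ ENNReal.ofReal t⁻¹ * ν (Ω \ innerSet Ω s) :=
  calc ∫⁻ x, slopeWithin S (definingSeq Ω t) x ∂ν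
      ≤ ∫⁻ x, (closure Ω ∩ {y | infDist y Ωᶜ ≤ t}).indicator
          (fun _ => ENNReal.ofReal t⁻¹) x ∂ν :=
        lintegral_mono (slopeWithin_definingSeq_le_indicator Ω S ht)
    _ ≤ ENNReal.ofReal t⁻¹ * ν (closure Ω ∩ {y | infDist y Ωᶜ ≤ t}) :=
        lintegral_indicator_const_le _ _
    _ ≤ ENNReal.ofReal t⁻¹ * (ν (frontier Ω) + ν (Ω \ innerSet Ω s)) := by
        gcongr
        exact (measure_mono (closure_inter_infDist_le_subset Ω hts)).trans
          (measure_union_le _ _)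
    _ = ENNReal.ofReal t⁻¹ * ν (Ω \ innerSet Ω s) := by rw [hΩ, zero_add]

theorem tendstoL1_definingSeq
    (hcollar : Tendsto (fun t => ν (Ω \ innerSet Ω t)) (𝓝[>] 0) (𝓝 0)) {u : ℕ → ℝ}
    (hu : Tendsto u atTop (𝓝[>] 0)) :
    TendstoL1 ν univ (fun n => definingSeq Ω (u n)) (Ω.indicator fun _ => 1) := by
  refine tendsto_of_tendsto_of_tendsto_of_le_of_le' tendsto_const_nhds (hcollar.comp hu)
    (Eventually.of_forall fun _ => zero_le) ?_
  filter_upwards [hu.eventually self_mem_nhdsWithin] with n hn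
  rw [Measure.restrict_univ]
  exact (lintegral_mono (abs_definingSeq_sub_indicator_le Ω hn)).trans
    ((lintegral_indicator_const_le _ _).trans_eq (one_mul _))

theorem limsup_lintegral_slopeWithin_definingSeq_le (hΩ : ν (frontier Ω) = 0) :
    limsup (fun t => ∫⁻ x, slopeWithin univ (definingSeq Ω t) x ∂ν) (𝓝[>] 0) ≤
      limsup (fun t => ν (Ω \ innerSet Ω t) / ENNReal.ofReal t) (𝓝[>] 0) := by
  set F := fun t => ∫⁻ x, slopeWithin univ (definingSeq Ω t) x ∂ν
  set g := fun t => ν (Ω \ innerSet Ω t) / ENNReal.ofReal t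
  have hscale : ∀ c : ℝ, 1 < c → limsup F (𝓝[>] 0) ≤ ENNReal.ofReal c * limsup g (𝓝[>] 0) := by
    intro c hc
    have hc0 : ENNReal.ofReal c ≠ 0 := by simpa using zero_lt_one.trans hc
    calc limsup F (𝓝[>] 0) ≤ limsup (fun t => ENNReal.ofReal c * g (c * t)) (𝓝[>] 0) := by
          refine limsup_le_limsup ?_
          filter_upwards [self_mem_nhdsWithin] with t (ht : 0 < t)
          refine (lintegral_slopeWithin_definingSeq_le ν Ω hΩ univ ht
            (lt_mul_of_one_lt_left ht hc)).trans_eq ?_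
          simp only [g]
          rw [ENNReal.ofReal_mul (by linarith), ← mul_div_assoc, ENNReal.mul_div_mul_left _ _ hc0
            ENNReal.ofReal_ne_top, ENNReal.ofReal_inv_of_pos ht, div_eq_mul_inv, mul_comm]
      _ = ENNReal.ofReal c * limsup (fun t => g (c * t)) (𝓝[>] 0) :=
          ENNReal.limsup_const_mul_of_ne_top ENNReal.ofReal_ne_top
      _ ≤ ENNReal.ofReal c * limsup g (𝓝[>] 0) := by
          gcongr
          exact limsup_comp_const_mul_nhdsGT_zero_le (by linarith) g
  have hlim : Tendsto (fun c => ENNReal.ofReal c * limsup g (𝓝[>] 0)) (𝓝[>] 1)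
      (𝓝 (limsup g (𝓝[>] 0))) := by
    simpa using ENNReal.Tendsto.mul_const
      ((ENNReal.continuous_ofReal.tendsto 1).mono_left nhdsWithin_le_nhds) (Or.inl (by simp))
  exact ge_of_tendsto hlim (eventually_nhdsWithin_of_forall hscale)

theorem totalVariationOn_indicator_le_liminf_lintegral_slopeWithin_definingSeq
    (hcollar : Tendsto (fun t => ν (Ω \ innerSet Ω t)) (𝓝[>] 0) (𝓝 0)) :
    totalVariationOn ν univ (Ω.indicator fun _ => (1 : ℝ)) ≤
      liminf (fun t => ∫⁻ x, slopeWithin univ (definingSeq Ω t) x ∂ν) (𝓝[>] 0) := by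
  obtain ⟨u, hFu, hu⟩ := exists_seq_tendsto_liminf (f := 𝓝[>] (0 : ℝ))
    (u := fun t => ∫⁻ x, slopeWithin univ (definingSeq Ω t) x ∂ν)
  have hlip : ∀ n, LocLipschitzOn univ (definingSeq Ω (u n)) := fun n _ _ =>
    ⟨_, univ, univ_mem, (lipschitzWith_definingSeq Ω (u n)).lipschitzOnWith⟩
  rw [← hFu.liminf_eq]
  simpa only [Measure.restrict_univ, Function.comp_def] using
    totalVariationOn_le_liminf ν hlip (tendstoL1_definingSeq ν Ω hcollar hu)

end Measure

theorem defining_sequence_slope_integral_tendsto_perimeter_general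
    [MetricSpace X] [MeasurableSpace X] (ν : Measure X) (Ω : Set X)
    (hreg : IsRegularDomain ν Ω)
    (hnull : ν (frontier Ω) = 0) :
    Tendsto (fun t : ℝ => ∫⁻ x, slopeWithin Set.univ (definingSeq Ω t) x ∂ν)
      (𝓝[>] (0 : ℝ))
      (𝓝 (totalVariationOn ν Set.univ (Ω.indicator fun _ => (1 : ℝ)))) := by
  obtain ⟨-, hBV, hTV⟩ := hreg
  have hcollar := tendsto_nhdsGT_zero_of_limsup_div_ne_top (hTV ▸ hBV.2.ne)
  exact tendsto_of_le_liminf_of_limsup_le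
    (totalVariationOn_indicator_le_liminf_lintegral_slopeWithin_definingSeq ν Ω hcollar)
    (hTV ▸ limsup_lintegral_slopeWithin_definingSeq_le ν Ω hnull)

/-- `Proposition prop:weakconvergence`: for a regular domain `Ω`, the integrals
of the slopes of the defining sequence converge to the perimeter:
`lim_{t→0⁺} ∫_X |∇φ_t^Ω| dν = |D1_Ω|_ν(X)`. -/
theorem defining_sequence_slope_integral_tendsto_perimeter
    [MetricSpace X] [CompleteSpace X] [TopologicalSpace.SeparableSpace X]
    [MeasurableSpace X] [BorelSpace X] (ν : Measure X) (Ω : Set X)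
    (hdoub : DoublingOn ν Set.univ) (hPI : WeakPoincareOn ν Set.univ)
    (hΩbd : Bornology.IsBounded Ω) (hreg : IsRegularDomain ν Ω)
    (hnull : ν (frontier Ω) = 0) (hPIΩ : WeakPoincareOn ν Ω) :
    Tendsto (fun t : ℝ => ∫⁻ x, slopeWithin Set.univ (definingSeq Ω t) x ∂ν)
      (𝓝[>] (0 : ℝ))
      (𝓝 (totalVariationOn ν Set.univ (Ω.indicator fun _ => (1 : ℝ)))) :=
  defining_sequence_slope_integral_tendsto_perimeter_general ν Ω hreg hnull
end
end

section
/- Let (𝔛,d) be a complete separable metric space and ν a doubling Borel regular measure on 𝔛. Let Ω ⊆ 𝔛 be open and bounded, and suppose there is C > 0 such that ν(B(x,r) ∩ Ω) ≥ C ν(B(x,r)) for ℋ-a.e. x ∈ ∂Ω and all r ∈ (0, diam Ω) (the measure density condition). Then ν(∂Ω) = 0. -/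
open MeasureTheory Metric Set Filter Topology ENNReal

noncomputable section

variable {X : Type*}

/-!
Covering by balls of radius at most one shows `ν ≤ ℋ`, so the measure density condition holds at
`ν`-a.e. point of `∂Ω`; with doubling it says that `Ω` fills a fixed proportion `c` of every small
closed ball centred there. Since `Ω` is open it is disjoint from `∂Ω`, so at such points `∂Ω` has
density at most `1 - c`, whereas by Lebesgue's density theorem `∂Ω` has density one at `ν`-a.e.
of its points.
-/

open scoped NNReal

section CodimOneHausdorff

variable [MetricSpace X] [MeasurableSpace X] {ν : Measure X}

lemma measure_le_codimOneHPre {R : ℝ} (hR : R ≤ 1) (A : Set X) : ν A ≤ codimOneHPre ν R A := by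
  refine le_iInf₂ fun c hc => ?_
  calc ν A ≤ ν (⋃ i, ball (c i).1 (c i).2) := measure_mono hc.2
    _ ≤ ∑' i, ν (ball (c i).1 (c i).2) := measure_iUnion_le _
    _ ≤ ∑' i, ν (ball (c i).1 (c i).2) / ENNReal.ofReal (c i).2 := by
        refine ENNReal.tsum_le_tsum fun i => ?_
        conv_lhs => rw [← div_one (ν _)]
        exact ENNReal.div_le_div_left (ENNReal.ofReal_le_one.2 ((hc.1 i).2.trans hR)) _

lemma measure_le_codimOneH (A : Set X) : ν A ≤ codimOneH ν A :=
  (measure_le_codimOneHPre le_rfl A).trans <|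
    le_iSup₂ (f := fun (R : ℝ) (_ : 0 < R) => codimOneHPre ν R A) 1 one_pos

lemma HAEOn.ae_restrict {A : Set X} {P : X → Prop} (hA : MeasurableSet A) (h : HAEOn ν A P) :
    ∀ᵐ x ∂ν.restrict A, P x := by
  rw [ae_restrict_iff' hA, ae_iff]
  exact measure_mono_null (fun x hx => Classical.not_imp.1 hx)
    (le_antisymm ((measure_le_codimOneH _).trans h.le) zero_le)

end CodimOneHausdorff

namespace DoublingOn

variable [MetricSpace X] [MeasurableSpace X] {ν : Measure X}

lemma measure_ball_lt_top (h : DoublingOn ν univ) (x : X) {r : ℝ} (hr : 0 < r) :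
    ν (ball x r) < ∞ := by
  obtain ⟨C, -, hC⟩ := h
  simpa only [univ_inter] using (hC x (mem_univ x) r hr).2.2

lemma isLocallyFiniteMeasure (h : DoublingOn ν univ) : IsLocallyFiniteMeasure ν :=
  ⟨fun x => ⟨ball x 1, ball_mem_nhds x one_pos, h.measure_ball_lt_top x one_pos⟩⟩

lemma exists_measure_ball_two_mul_le (h : DoublingOn ν univ) :
    ∃ C : ℝ≥0, C ≠ 0 ∧ ∀ (x : X) {r : ℝ}, 0 < r → ν (ball x (2 * r)) ≤ C * ν (ball x r) := by
  obtain ⟨C, hC1, hC⟩ := h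
  exact ⟨C, (one_pos.trans_le hC1).ne', fun x r hr => by
    simpa only [univ_inter] using (hC x (mem_univ x) r hr).2.1⟩

lemma exists_measure_closedBall_le (h : DoublingOn ν univ) :
    ∃ C : ℝ≥0, C ≠ 0 ∧ ∀ (x : X) {r : ℝ}, 0 < r → ν (closedBall x r) ≤ C * ν (ball x r) := by
  obtain ⟨C, hC0, hC⟩ := h.exists_measure_ball_two_mul_le
  exact ⟨C, hC0, fun x r hr =>
    (measure_mono (closedBall_subset_ball (by linarith))).trans (hC x hr)⟩

lemma isUnifLocDoublingMeasure (h : DoublingOn ν univ) : IsUnifLocDoublingMeasure ν := by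
  obtain ⟨C, -, hC⟩ := h.exists_measure_ball_two_mul_le
  refine ⟨⟨C * C, ?_⟩⟩
  filter_upwards [self_mem_nhdsWithin] with ε (hε : 0 < ε) x
  calc ν (closedBall x (2 * ε)) ≤ ν (ball x (2 * (2 * ε))) :=
        measure_mono (closedBall_subset_ball (by linarith))
    _ ≤ C * (C * ν (ball x ε)) := by
        grw [hC x (by positivity), hC x hε]
    _ ≤ ↑(C * C) * ν (closedBall x ε) := by
        rw [ENNReal.coe_mul, mul_assoc]
        gcongr
        exact ball_subset_closedBall

end DoublingOn

section Density

variable [PseudoMetricSpace X] [MeasurableSpace X] [SecondCountableTopology X] [BorelSpace X]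
  {ν : Measure X} [IsLocallyFiniteMeasure ν] [IsUnifLocDoublingMeasure ν]

/-- `F` has density one at almost every point of `F` (Lebesgue), which leaves no room for a
proportion `c` of the ball inside a set disjoint from `F`. -/
lemma ae_restrict_not_frequently_le_measure_inter {F S : Set X} (hS : MeasurableSet S)
    (hSF : Disjoint S F) {c : ℝ≥0∞} (hc : c ≠ 0) :
    ∀ᵐ x ∂ν.restrict F, ¬ ∃ᶠ r in 𝓝[>] 0, c * ν (closedBall x r) ≤ ν (S ∩ closedBall x r) := by
  filter_upwards [IsUnifLocDoublingMeasure.ae_tendsto_measure_inter_div ν F 1] with x hdens hfreq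
  have hF_density : Tendsto (fun r => ν (F ∩ closedBall x r) / ν (closedBall x r))
      (𝓝[>] 0) (𝓝 1) := by
    refine hdens (fun _ => x) id tendsto_id ?_
    filter_upwards [self_mem_nhdsWithin] with r (hr : 0 < r)
    simpa using hr.le
  have hnondegenerate : ∀ᶠ r in 𝓝[>] 0, 0 < ν (F ∩ closedBall x r) / ν (closedBall x r) :=
    hF_density.eventually_const_lt zero_lt_one
  have hsum_le : ∃ᶠ r in 𝓝[>] 0, ν (F ∩ closedBall x r) / ν (closedBall x r) + c ≤ 1 := by
    refine (hfreq.and_eventually hnondegenerate).mono fun r ⟨hr, hr_pos⟩ => ?_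
    obtain ⟨hF_ne, hB_ne_top⟩ := ENNReal.div_pos_iff.1 hr_pos
    have hB_ne : ν (closedBall x r) ≠ 0 := fun h0 => hF_ne (measure_mono_null inter_subset_right h0)
    have hc_le : c ≤ ν (S ∩ closedBall x r) / ν (closedBall x r) :=
      (ENNReal.le_div_iff_mul_le (Or.inl hB_ne) (Or.inl hB_ne_top)).2 hr
    have hdisj : Disjoint (F ∩ closedBall x r) (S ∩ closedBall x r) :=
      hSF.symm.mono inter_subset_left inter_subset_left
    calc ν (F ∩ closedBall x r) / ν (closedBall x r) + c
        ≤ (ν (F ∩ closedBall x r) + ν (S ∩ closedBall x r)) / ν (closedBall x r) := by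
          rw [← ENNReal.div_add_div_same]; gcongr
      _ = ν ((F ∩ closedBall x r) ∪ (S ∩ closedBall x r)) / ν (closedBall x r) := by
          rw [measure_union hdisj (hS.inter measurableSet_closedBall)]
      _ ≤ ν (closedBall x r) / ν (closedBall x r) := by
          gcongr; exact union_subset inter_subset_right inter_subset_right
      _ ≤ 1 := ENNReal.div_self_le_one
  have h_limit : 1 + c ≤ 1 + 0 := by
    simpa using le_of_tendsto_of_frequently (hF_density.add tendsto_const_nhds) hsum_le
  exact hc (nonpos_iff_eq_zero.1 ((ENNReal.add_le_add_iff_left one_ne_top).1 h_limit))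

lemma measure_eq_zero_of_ae_frequently_le_measure_inter {E S : Set X} (hS : MeasurableSet S)
    (hSE : Disjoint S E) {c : ℝ≥0∞} (hc : c ≠ 0)
    (h : ∀ᵐ x ∂ν.restrict E, ∃ᶠ r in 𝓝[>] 0, c * ν (closedBall x r) ≤ ν (S ∩ closedBall x r)) :
    ν E = 0 := by
  have : ∀ᵐ x ∂ν.restrict E, False := by
    filter_upwards [h, ae_restrict_not_frequently_le_measure_inter hS hSE hc] with x h₁ h₂
    exact h₂ h₁
  rwa [eventually_false_iff_eq_bot, ae_eq_bot, Measure.restrict_eq_zero] at this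

end Density

theorem measure_frontier_eq_zero_of_measure_density_general
    [MetricSpace X] [TopologicalSpace.SeparableSpace X]
    [MeasurableSpace X] [BorelSpace X] (ν : Measure X)
    (hdoub : DoublingOn ν Set.univ) (Ω : Set X)
    (hΩopen : IsOpen Ω) (hΩbd : Bornology.IsBounded Ω)
    (hmd : ∃ C : NNReal, 0 < C ∧ HAEOn ν (frontier Ω)
      (fun x => ∀ r : ℝ, 0 < r → r < Metric.diam Ω →
        (C : ℝ≥0∞) * ν (ball x r) ≤ ν (Ω ∩ ball x r))) :
    ν (frontier Ω) = 0 := by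
  by_cases hsub : Ω.Subsingleton
  · simp [(isClopen_iff_frontier_eq_empty.1 ⟨hsub.isClosed, hΩopen⟩)]
  have hdiam : 0 < diam Ω := diam_pos (not_subsingleton_iff.1 hsub) hΩbd
  obtain ⟨C, hC, hdensity⟩ := hmd
  obtain ⟨Cd, hCd, hclosedBall⟩ := hdoub.exists_measure_closedBall_le
  have : SecondCountableTopology X := UniformSpace.secondCountable_of_separable X
  have := hdoub.isLocallyFiniteMeasure
  have := hdoub.isUnifLocDoublingMeasure
  refine measure_eq_zero_of_ae_frequently_le_measure_inter (c := C / Cd) hΩopen.measurableSet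
    (disjoint_frontier_iff_isOpen.2 hΩopen).symm
    (ENNReal.div_pos (ENNReal.coe_ne_zero.2 hC.ne') ENNReal.coe_ne_top).ne' ?_
  filter_upwards [hdensity.ae_restrict isClosed_frontier.measurableSet] with x hx
  refine Eventually.frequently ?_
  filter_upwards [Ioo_mem_nhdsGT hdiam] with r ⟨hr, hr_diam⟩
  calc C / Cd * ν (closedBall x r) ≤ C / Cd * (Cd * ν (ball x r)) := by
        grw [hclosedBall x hr]
    _ = C * ν (ball x r) := by
        rw [← mul_assoc, ENNReal.div_mul_cancel (ENNReal.coe_ne_zero.2 hCd) ENNReal.coe_ne_top]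
    _ ≤ ν (Ω ∩ ball x r) := hx r hr hr_diam
    _ ≤ ν (Ω ∩ closedBall x r) := by grw [ball_subset_closedBall]

/-- if `Ω` is an open bounded subset of a complete separable metric space with
a doubling Borel (regular) measure, and `Ω` satisfies the measure density condition, then the
boundary of `Ω` is `ν`-null. -/
theorem measure_frontier_eq_zero_of_measure_density
    [MetricSpace X] [CompleteSpace X] [TopologicalSpace.SeparableSpace X]
    [MeasurableSpace X] [BorelSpace X] (ν : Measure X)
    (hdoub : DoublingOn ν Set.univ) (Ω : Set X)
    (hΩopen : IsOpen Ω) (hΩbd : Bornology.IsBounded Ω)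
    (hmd : ∃ C : NNReal, 0 < C ∧ HAEOn ν (frontier Ω)
      (fun x => ∀ r : ℝ, 0 < r → r < Metric.diam Ω →
        (C : ℝ≥0∞) * ν (ball x r) ≤ ν (Ω ∩ ball x r))) :
    ν (frontier Ω) = 0 :=
  measure_frontier_eq_zero_of_measure_density_general ν hdoub Ω hΩopen hΩbd hmd

end
end
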